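/- arXiv:2604.03324 — 7 statements merged into one kernel-verified Lean document; each statement's English description precedes it below -/
import Mathlib

section
/- Let E be an effect algebra and ∘ a total binary operation satisfying (S1), (S2), (S3), and (S4) (where (S4) states: if a ∘ b = b ∘ a then a ∘ b' = b' ∘ a and a ∘ (b ∘ c) = (a ∘ b) ∘ c). Then the right-unit law holds: a ∘ 1 = a for every a ∈ E. -/
/-- An effect algebra `(E, 0, 1, ⊕)`, with the partial operation `⊕` encoded by a
definedness predicate `perp` together with a total function `add` whose value is only
meaningful on `perp` pairs. -/
structure EffectAlgebra (α : Type*) where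
  /-- `perp a b` means `a ⊕ b` is defined. -/
  perp : α → α → Prop
  /-- the orthogonal sum (meaningful when `perp a b`). -/
  add : α → α → α
  zero : α
  one : α
  /-- commutativity -/
  perp_comm : ∀ a b, perp a b → perp b a
  add_comm : ∀ a b, perp a b → add a b = add b a
  /-- associativity -/
  perp_left : ∀ a b c, perp b c → perp a (add b c) → perp a b
  perp_assoc : ∀ a b c, perp b c → perp a (add b c) → perp (add a b) c
  add_assoc : ∀ a b c, perp b c → perp a (add b c) →
    add (add a b) c = add a (add b c)
  /-- unique orthosupplement -/
  orthosupp : ∀ a, ∃! b, perp a b ∧ add a b = one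
  /-- zero-one law -/
  zero_one : ∀ a, perp a one → a = zero
  /-- `zero` is the orthosupplement of `one` -/
  perp_zero_one : perp zero one
  add_zero_one : add zero one = one

namespace EffectAlgebra

variable {α : Type*} (E : EffectAlgebra α)

/-- A map `L` is additive: if `b ⊥ c` then `L b ⊥ L c` and `L (b ⊕ c) = L b ⊕ L c`. -/
def Additive (L : α → α) : Prop :=
  ∀ b c, E.perp b c → E.perp (L b) (L c) ∧ L (E.add b c) = E.add (L b) (L c)

/-- (S1): every left translation is additive. -/
def S1 (op : α → α → α) : Prop := ∀ a, E.Additive (op a)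

/-- (S2): `1 ∘ a = a`. -/
def S2 (op : α → α → α) : Prop := ∀ a, op E.one a = a

/-- (S3): `a ∘ b = 0` implies `b ∘ a = 0`. -/
def S3 (op : α → α → α) : Prop := ∀ a b, op a b = E.zero → op b a = E.zero

/-- `b'` is the orthosupplement of `b`. -/
def IsOrthosupp (b b' : α) : Prop := E.perp b b' ∧ E.add b b' = E.one

/-- (S4): if `a ∘ b = b ∘ a` then `a ∘ b' = b' ∘ a` and `a ∘ (b ∘ c) = (a ∘ b) ∘ c`. -/
def S4 (op : α → α → α) : Prop :=
  ∀ a b, op a b = op b a →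
    (∀ b', E.IsOrthosupp b b' → op a b' = op b' a) ∧
    (∀ c, op a (op b c) = op (op a b) c)

/-- the induced order: `a ≤ b` iff `a ⊕ c = b` for some `c`. -/
def le (a b : α) : Prop := ∃ c, E.perp a c ∧ E.add a c = b

/-- an atom: a minimal nonzero element. -/
def IsAtom' (p : α) : Prop :=
  p ≠ E.zero ∧ ∀ x, E.le x p → x = E.zero ∨ x = p

end EffectAlgebra

/-- `NSum E a n s` : `s` is the `n`-fold orthogonal sum `a ⊕ ⋯ ⊕ a`. -/
inductive NSum {α : Type*} (E : EffectAlgebra α) (a : α) : ℕ → α → Prop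
  | zero : NSum E a 0 E.zero
  | succ : ∀ {n s}, NSum E a n s → E.perp s a → NSum E a (n + 1) (E.add s a)

/-- `0 ⊕ a` is defined and equals `a`. -/
lemma EffectAlgebra.zero_add' {α : Type*} (E : EffectAlgebra α) (a : α) :
    E.perp E.zero a ∧ E.add E.zero a = a := by
  obtain ⟨a', ⟨hp, hs⟩, _⟩ := E.orthosupp a
  have h01 : E.perp E.zero (E.add a a') := by rw [hs]; exact E.perp_zero_one
  have hpl : E.perp E.zero a := E.perp_left _ _ _ hp h01
  have hpa : E.perp (E.add E.zero a) a' := E.perp_assoc _ _ _ hp h01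
  have hadd : E.add (E.add E.zero a) a' = E.one := by
    rw [E.add_assoc _ _ _ hp h01, hs, E.add_zero_one]
  obtain ⟨b, _, hbuniq⟩ := E.orthosupp a'
  have h1 : a = b := hbuniq a ⟨E.perp_comm _ _ hp,
    (E.add_comm _ _ (E.perp_comm _ _ hp)).trans hs⟩
  have h2 : E.add E.zero a = b := hbuniq _ ⟨E.perp_comm _ _ hpa,
    (E.add_comm _ _ (E.perp_comm _ _ hpa)).trans hadd⟩
  exact ⟨hpl, h2.trans h1.symm⟩

/-- If `x ⊥ x` and `x ⊕ x = x`, then `x = 0`. -/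
lemma EffectAlgebra.eq_zero_of_idem {α : Type*} (E : EffectAlgebra α) (x : α)
    (hp : E.perp x x) (hs : E.add x x = x) : x = E.zero := by
  obtain ⟨x', ⟨hpx, hsx⟩, _⟩ := E.orthosupp x
  have hpx' : E.perp x' (E.add x x) := by rw [hs]; exact E.perp_comm _ _ hpx
  have hpa : E.perp (E.add x' x) x := E.perp_assoc _ _ _ hp hpx'
  have hx'x : E.add x' x = E.one := (E.add_comm _ _ (E.perp_comm _ _ hpx)).trans hsx
  rw [hx'x] at hpa
  exact E.zero_one x (E.perp_comm _ _ hpa)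

/-- right unit from (S1)-(S4): `a ∘ 1 = a`. -/
theorem right_unit_of_S1_S4 {α : Type*} (E : EffectAlgebra α) (op : α → α → α)
    (h1 : E.S1 op) (h2 : E.S2 op) (h3 : E.S3 op) (h4 : E.S4 op) :
    ∀ a, op a E.one = a := by
  intro a
  have hp00 : E.perp E.zero E.zero := (E.zero_add' E.zero).1
  have hs00 : E.add E.zero E.zero = E.zero := (E.zero_add' E.zero).2
  obtain ⟨hperp, hadd⟩ := h1 a E.zero E.zero hp00
  rw [hs00] at hadd
  have ha0 : op a E.zero = E.zero := E.eq_zero_of_idem _ hperp hadd.symm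
  have hcomm : op a E.zero = op E.zero a := ha0.trans (h3 a E.zero ha0).symm
  have := (h4 a E.zero hcomm).1 E.one ⟨E.perp_zero_one, E.add_zero_one⟩
  rw [this, h2]
end

section
/- Let E be an effect algebra containing an atom p whose isotropic index ord(p) = sup{n : the n-fold orthogonal sum np exists} is finite and at least 2. Then E admits no total binary operation satisfying axioms (S1)–(S4). -/
namespace EffectAlgebra

variable {α : Type*} (E : EffectAlgebra α)

lemma perp_zero' (a : α) : E.perp E.zero a := by
  obtain ⟨b, ⟨hab, h1⟩, _⟩ := E.orthosupp a
  have h : E.perp E.zero (E.add a b) := by rw [h1]; exact E.perp_zero_one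
  exact E.perp_left _ _ _ hab h

lemma zero_add'_s5 (a : α) : E.add E.zero a = a := by
  obtain ⟨b, ⟨hab, h1⟩, _⟩ := E.orthosupp a
  obtain ⟨y, _, huniq⟩ := E.orthosupp b
  have h01 : E.perp E.zero (E.add a b) := by rw [h1]; exact E.perp_zero_one
  have hperp := E.perp_assoc _ _ _ hab h01
  have hadd := E.add_assoc _ _ _ hab h01
  rw [h1, E.add_zero_one] at hadd
  have c1 : E.perp b (E.add E.zero a) ∧ E.add b (E.add E.zero a) = E.one :=
    ⟨E.perp_comm _ _ hperp, by rw [← E.add_comm _ _ hperp, hadd]⟩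
  have c2 : E.perp b a ∧ E.add b a = E.one :=
    ⟨E.perp_comm _ _ hab, by rw [← E.add_comm _ _ hab, h1]⟩
  rw [huniq _ c1, huniq _ c2]

lemma add_zero' (a : α) : E.add a E.zero = a := by
  rw [← E.add_comm _ _ (E.perp_zero' a), E.zero_add'_s5]

lemma perp_assoc' {a b c : α} (h1 : E.perp a b) (h2 : E.perp (E.add a b) c) :
    E.perp b c ∧ E.perp a (E.add b c) ∧ E.add a (E.add b c) = E.add (E.add a b) c := by
  have hba := E.perp_comm _ _ h1
  have h2' : E.perp c (E.add b a) := by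
    rw [E.add_comm a b h1] at h2; exact E.perp_comm _ _ h2
  have hcb := E.perp_left c b a hba h2'
  have h3 := E.perp_assoc c b a hba h2'
  have hbc := E.perp_comm _ _ hcb
  have h4 : E.perp a (E.add b c) := by
    have h5 := E.perp_comm _ _ h3
    rwa [E.add_comm c b hcb] at h5
  exact ⟨hbc, h4, (E.add_assoc a b c hbc h4).symm⟩

lemma supp_swap {a b d : α} (hab : E.perp a b) (hd : E.perp (E.add a b) d)
    (hd1 : E.add (E.add a b) d = E.one) :
    E.perp (E.add a d) b ∧ E.add (E.add a d) b = E.one := by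
  obtain ⟨hbd, had, heq⟩ := E.perp_assoc' hab hd
  have hadb : E.perp a (E.add d b) := by rwa [E.add_comm b d hbd] at had
  have hdb := E.perp_comm _ _ hbd
  refine ⟨E.perp_assoc a d b hdb hadb, ?_⟩
  rw [E.add_assoc a d b hdb hadb, ← E.add_comm b d hbd, heq, hd1]

lemma cancel (a b c : α) (hab : E.perp a b) (hac : E.perp a c)
    (h : E.add a b = E.add a c) : b = c := by
  obtain ⟨d, ⟨hd, hd1⟩, _⟩ := E.orthosupp (E.add a b)
  obtain ⟨hb1, hb2⟩ := E.supp_swap hab hd hd1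
  rw [h] at hd hd1
  obtain ⟨hc1, hc2⟩ := E.supp_swap hac hd hd1
  obtain ⟨y, _, huniq⟩ := E.orthosupp (E.add a d)
  rw [huniq _ ⟨hb1, hb2⟩, huniq _ ⟨hc1, hc2⟩]

lemma zero_of_add_zero {a b : α} (hab : E.perp a b) (h : E.add a b = E.zero) :
    a = E.zero ∧ b = E.zero := by
  have h1 : E.perp (E.add a b) E.one := by rw [h]; exact E.perp_zero_one
  obtain ⟨hb1, _, _⟩ := E.perp_assoc' hab h1
  have hb0 := E.zero_one b hb1
  rw [hb0, E.add_zero'] at h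
  exact ⟨h, hb0⟩

end EffectAlgebra

/-- finite isotropic atom obstruction. If `E` has an atom `p` of finite
isotropic index `n` with `2 ≤ n` (the `n`-fold sum `np` exists but `(n+1)p` does not),
then `E` admits no (S1)-(S4) operation. -/
theorem no_S1_S4_of_finite_isotropic_atom {α : Type*} (E : EffectAlgebra α)
    (p : α) (hp : E.IsAtom' p) (n : ℕ) (hn : 2 ≤ n)
    (hex : ∃ s, NSum E p n s) (hmax : ¬ ∃ s, NSum E p (n + 1) s) :
    ¬ ∃ op : α → α → α, E.S1 op ∧ E.S2 op ∧ E.S3 op ∧ E.S4 op := by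
  rintro ⟨op, hS1, hS2, hS3, hS4⟩
  -- op a 0 = 0
  have hop0 : ∀ a, op a E.zero = E.zero := by
    intro a
    obtain ⟨hperp, hadd⟩ := hS1 a E.zero E.zero (E.perp_zero' _)
    rw [E.zero_add'_s5] at hadd
    exact E.cancel (op a E.zero) (op a E.zero) E.zero hperp
      (E.perp_comm _ _ (E.perp_zero' _)) (by rw [E.add_zero', ← hadd])
  -- op a 1 = a
  have hop1 : ∀ a, op a E.one = a := by
    intro a
    have hc : op a E.zero = op E.zero a := by rw [hop0, hS3 a E.zero (hop0 a)]
    have h := (hS4 a E.zero hc).1 E.one ⟨E.perp_zero_one, E.add_zero_one⟩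
    rw [hS2] at h
    exact h
  obtain ⟨p', ⟨hpp', hpp1⟩, _⟩ := E.orthosupp p
  obtain ⟨hperp, hadd⟩ := hS1 p p p' hpp'
  rw [hpp1, hop1] at hadd
  have hle : E.le (op p p) p := ⟨op p p', hperp, hadd.symm⟩
  obtain ⟨s, hs⟩ := hex
  have hnp : ¬ E.perp s p := fun h => hmax ⟨_, NSum.succ hs h⟩
  rcases hp.2 _ hle with hx0 | hxp
  · -- op p p = 0 : show p' ∘ (kp) = kp, hence s ≤ p', hence s ⊥ p, contradiction
    have hpp'val : op p p' = p := by rw [hx0, E.zero_add'_s5] at hadd; exact hadd.symm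
    have hswap := (hS4 p p rfl).1 p' ⟨hpp', hpp1⟩
    have hp'p : op p' p = p := by rw [← hswap, hpp'val]
    have opmul : ∀ k t, NSum E p k t → op p' t = t := by
      intro k t ht
      induction ht with
      | zero => exact hop0 p'
      | succ ht hperp' ih =>
        obtain ⟨_, haddt⟩ := hS1 p' _ _ hperp'
        rw [haddt, ih, hp'p]
    obtain ⟨s2, ⟨hss', hss1⟩, _⟩ := E.orthosupp s
    obtain ⟨hperp2, hadd2⟩ := hS1 p' s s2 hss'
    rw [hss1, hop1, opmul n s hs] at hadd2
    rw [opmul n s hs] at hperp2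
    -- hadd2 : p' = add s (op p' s2)
    have h1 : E.add (E.add s (op p' s2)) p = E.one := by
      rw [← hadd2, ← E.add_comm p p' hpp', hpp1]
    have hperp3 : E.perp (E.add s (op p' s2)) p := by
      have h := E.perp_comm _ _ hpp'
      rwa [hadd2] at h
    obtain ⟨hcp, hs_cp, _⟩ := E.perp_assoc' hperp2 hperp3
    have h2 : E.perp s (E.add p (op p' s2)) := by
      rwa [E.add_comm _ _ hcp] at hs_cp
    exact hnp (E.perp_left s p _ (E.perp_comm _ _ hcp) h2)
  · -- op p p = p : show p ∘ (kp) = kp, hence np ≤ p, hence p = 0, contradiction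
    have opmul : ∀ k t, NSum E p k t → op p t = t := by
      intro k t ht
      induction ht with
      | zero => exact hop0 p
      | succ ht hperp' ih =>
        obtain ⟨_, haddt⟩ := hS1 p _ _ hperp'
        rw [haddt, ih, hxp]
    obtain ⟨s2, ⟨hss', hss1⟩, _⟩ := E.orthosupp s
    obtain ⟨hperp2, hadd2⟩ := hS1 p s s2 hss'
    rw [hss1, hop1, opmul n s hs] at hadd2
    rw [opmul n s hs] at hperp2
    -- hadd2 : p = add s (op p s2), hperp2 : perp s (op p s2)
    cases hs with
    | zero => omega
    | @succ m t ht htp =>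
      -- s = add t p
      have hc : E.add t p = E.add p t := E.add_comm t p htp
      rw [hc] at hadd2 hperp2
      obtain ⟨htc, hptc, heq⟩ := E.perp_assoc' (E.perp_comm _ _ htp) hperp2
      have h5 : E.add p (E.add t (op p s2)) = E.add p E.zero := by
        rw [heq, ← hadd2, E.add_zero']
      have h0 : E.add t (op p s2) = E.zero :=
        E.cancel p _ _ hptc (E.perp_comm _ _ (E.perp_zero' p)) h5
      have ht0 : t = E.zero := (E.zero_of_add_zero htc h0).1
      cases ht with
      | zero => omega
      | @succ m' u hu hup =>
        exact hp.1 (E.zero_of_add_zero hup ht0).2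
end

section
/- Let u ∈ ℤ^r and v ∈ ℤ^s have all entries positive, and let L : E_u → E_v be a map. Then L is additive (L(x ⊕ y) = L(x) ⊕ L(y) whenever x + y ≤ u) if and only if there exists a unique s × r matrix M with nonnegative integer entries satisfying Mu ≤ v (componentwise) such that L(x) = Mx for all x ∈ E_u. -/
/-- The simplicial interval effect algebra `E_u = [0, u] ⊆ ℤ^r`, with
`x ⊕ y = x + y` defined whenever `x + y ≤ u` componentwise. -/
def Eu {r : ℕ} (u : Fin r → ℤ) : Type := {x : Fin r → ℤ // 0 ≤ x ∧ x ≤ u}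

/-- A map `L : E_u → E_v` is additive: `L (x ⊕ y) = L x ⊕ L y` whenever `x + y ≤ u`,
i.e. whenever `x + y` is again an element `z` of `E_u`. -/
def AdditiveMap {r s : ℕ} (u : Fin r → ℤ) (v : Fin s → ℤ)
    (L : Eu u → Eu v) : Prop :=
  ∀ x y z : Eu u, x.val + y.val = z.val → (L z).val = (L x).val + (L y).val

/-- (S1) for a binary operation on `E_u`: every left translation is additive. -/
def EuS1 {r : ℕ} (u : Fin r → ℤ) (op : Eu u → Eu u → Eu u) : Prop :=
  ∀ a : Eu u, AdditiveMap u u (op a)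

/-- (S3) for a binary operation on `E_u`: `a ∘ b = 0` implies `b ∘ a = 0`. -/
def EuS3 {r : ℕ} (u : Fin r → ℤ) (op : Eu u → Eu u → Eu u) : Prop :=
  ∀ a b : Eu u, (op a b).val = 0 → (op b a).val = 0

/-!
Every element of `E_u` is reached from `0` by adding unit vectors `e_j` one at a time without
leaving `E_u`, so an additive map is determined by its values `L e_j`, which form the columns
of `M`. Then `M u = L u ≤ v`, and uniqueness holds because `e_j ∈ E_u` as `u j ≥ 1`.
-/

namespace Eu

variable {r : ℕ} {u : Fin r → ℤ}

def top (hu : 0 ≤ u) : Eu u := ⟨u, hu, le_rfl⟩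

def single (hu : 0 ≤ u) (j : Fin r) (hj : 1 ≤ u j) : Eu u :=
  ⟨Pi.single j 1,
    fun k => by rcases eq_or_ne k j with rfl | h <;> simp [*],
    fun k => by
      rcases eq_or_ne k j with rfl | h
      · simpa using hj
      · simpa [h] using hu k⟩

def subSingle (x : Eu u) (j : Fin r) (hx : 1 ≤ x.val j) : Eu u :=
  ⟨x.val - Pi.single j 1,
    fun k => by
      rcases eq_or_ne k j with rfl | h
      · simpa using hx
      · simpa [h] using x.2.1 k,
    fun k => by
      rcases eq_or_ne k j with rfl | h
      · simpa using (by linarith [x.2.2 k] : x.val k - 1 ≤ u k)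
      · simpa [h] using x.2.2 k⟩

theorem subSingle_add_single (hu : 0 ≤ u) (x : Eu u) (j : Fin r) (hx : 1 ≤ x.val j) :
    (x.subSingle j hx).val + (single hu j (hx.trans (x.2.2 j))).val = x.val :=
  sub_add_cancel _ _

theorem val_eq_zero_of_forall_lt_one (x : Eu u) (hx : ∀ j, x.val j < 1) : x.val = 0 :=
  funext fun j => le_antisymm (Int.lt_add_one_iff.1 (hx j)) (x.2.1 j)

theorem sum_toNat_subSingle (x : Eu u) (j : Fin r) (hx : 1 ≤ x.val j) :
    ∑ k, ((x.subSingle j hx).val k).toNat + 1 = ∑ k, (x.val k).toNat := by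
  have hoff : ∀ k ∈ ({j}ᶜ : Finset (Fin r)),
      ((x.subSingle j hx).val k).toNat = (x.val k).toNat := fun k hk => by
    simp [subSingle, (by simpa using hk : k ≠ j)]
  rw [Fintype.sum_eq_add_sum_compl j, Fintype.sum_eq_add_sum_compl j (fun k => (x.val k).toNat),
    Finset.sum_congr rfl hoff]
  simp only [subSingle, Pi.sub_apply, Pi.single_eq_same]
  omega

theorem induction_on_subSingle {P : Eu u → Prop} (zero : ∀ x : Eu u, x.val = 0 → P x)
    (step : ∀ (x : Eu u) (j : Fin r) (hx : 1 ≤ x.val j), P (x.subSingle j hx) → P x)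
    (x : Eu u) : P x := by
  induction h : ∑ j, (x.val j).toNat generalizing x with
  | zero =>
    refine zero x (val_eq_zero_of_forall_lt_one x fun j => ?_)
    have := Finset.sum_eq_zero_iff.1 h j (Finset.mem_univ j)
    omega
  | succ n ih =>
    by_cases hx : ∀ j, x.val j < 1
    · simp [val_eq_zero_of_forall_lt_one x hx] at h
    push Not at hx
    obtain ⟨j, hj⟩ := hx
    exact step x j hj (ih _ (by linarith [x.sum_toNat_subSingle j hj]))

end Eu

section AdditiveMap

variable {r s : ℕ} {u : Fin r → ℤ} {v : Fin s → ℤ} {L : Eu u → Eu v}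

theorem AdditiveMap.val_apply_eq_zero (hL : AdditiveMap u v L) (x : Eu u) (hx : x.val = 0) :
    (L x).val = 0 :=
  (add_eq_left.1 (hL x x x (by rw [hx, add_zero])).symm)

theorem AdditiveMap.val_apply_eq_mulVec (hL : AdditiveMap u v L) (hu : 0 ≤ u)
    {M : Matrix (Fin s) (Fin r) ℤ}
    (hM : ∀ j (hj : 1 ≤ u j), M.col j = (L (Eu.single hu j hj)).val) (x : Eu u) :
    (L x).val = M.mulVec x.val := by
  induction x using Eu.induction_on_subSingle with
  | zero x hx => rw [hL.val_apply_eq_zero x hx, hx, Matrix.mulVec_zero]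
  | step x j hx ih =>
    have hsum := x.subSingle_add_single hu j hx
    rw [hL _ _ x hsum, ih, ← hM, ← Matrix.mulVec_single_one, ← Matrix.mulVec_add]
    exact congrArg M.mulVec hsum

theorem additiveMap_of_val_apply_eq_mulVec (M : Matrix (Fin s) (Fin r) ℤ)
    (hM : ∀ x : Eu u, (L x).val = M.mulVec x.val) : AdditiveMap u v L := by
  intro x y z hxyz
  rw [hM x, hM y, hM z, ← hxyz, Matrix.mulVec_add]

end AdditiveMap

theorem additive_iff_matrix_general {r s : ℕ} (u : Fin r → ℤ) (v : Fin s → ℤ)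
    (hu : ∀ i, 1 ≤ u i) (L : Eu u → Eu v) :
    AdditiveMap u v L ↔
      ∃! M : Matrix (Fin s) (Fin r) ℤ,
        (∀ i j, 0 ≤ M i j) ∧ M.mulVec u ≤ v ∧ ∀ x : Eu u, (L x).val = M.mulVec x.val := by
  refine ⟨fun hL => ?_,
    fun ⟨M, ⟨_, _, hM⟩, _⟩ => additiveMap_of_val_apply_eq_mulVec M hM⟩
  have hu0 : 0 ≤ u := fun i => zero_le_one.trans (hu i)
  let M : Matrix (Fin s) (Fin r) ℤ := Matrix.of fun i j => (L (Eu.single hu0 j (hu j))).val i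
  have hLM := AdditiveMap.val_apply_eq_mulVec hL hu0 (M := M) fun _ _ => rfl
  refine ⟨M, ⟨fun i j => (L _).2.1 i, ?_, hLM⟩, fun M' ⟨_, _, hM'⟩ => ?_⟩
  · exact hLM (Eu.top hu0) ▸ (L (Eu.top hu0)).2.2
  · refine Matrix.ext_col fun j => ?_
    rw [← Matrix.mulVec_single_one]
    exact (hM' (Eu.single hu0 j (hu j))).symm

/-- a map `L : E_u → E_v` is additive iff there is a unique matrix `M`
with nonnegative integer entries and `M u ≤ v` componentwise such that `L x = M x`. -/
theorem additive_iff_matrix {r s : ℕ} (u : Fin r → ℤ) (v : Fin s → ℤ)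
    (hu : ∀ i, 1 ≤ u i) (hv : ∀ j, 1 ≤ v j) (L : Eu u → Eu v) :
    AdditiveMap u v L ↔
      ∃! M : Matrix (Fin s) (Fin r) ℤ,
        (∀ i j, 0 ≤ M i j) ∧ M.mulVec u ≤ v ∧ ∀ x : Eu u, (L x).val = M.mulVec x.val :=
  additive_iff_matrix_general u v hu L
end

section
/- Let u ∈ ℤ^r have all entries positive. A binary operation ∘ on E_u satisfies (S1) and (S2) if and only if there is a family of nonnegative integer matrices (M_a) indexed by a ∈ E_u, each satisfying M_a u ≤ u componentwise, with a ∘ x = M_a x for all x, and M_u = I_r (the identity matrix). -/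
/-- The `j`-th standard basis vector, as an element of `E_u`. -/
def euBasis {r : ℕ} (u : Fin r → ℤ) (hu : ∀ i, 1 ≤ u i) (j : Fin r) : Eu u :=
  ⟨fun i => if i = j then 1 else 0,
    fun i => by dsimp; split <;> norm_num,
    fun i => by dsimp; split <;> [exact hu i; exact le_trans zero_le_one (hu i)]⟩

lemma additive_eq_sum {r s : ℕ} (u : Fin r → ℤ) (v : Fin s → ℤ) (hu : ∀ i, 1 ≤ u i)
    (L : Eu u → Eu v) (hL : AdditiveMap u v L) :
    ∀ x : Eu u, (L x).val = ∑ j, x.val j • (L (euBasis u hu j)).val := by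
  suffices h : ∀ n : ℕ, ∀ x : Eu u, (∑ j, x.val j) = n →
      (L x).val = ∑ j, x.val j • (L (euBasis u hu j)).val by
    intro x
    have hnn : 0 ≤ ∑ j, x.val j := Finset.sum_nonneg fun j _ => x.2.1 j
    exact h (∑ j, x.val j).toNat x (Int.toNat_of_nonneg hnn).symm
  intro n
  induction n with
  | zero =>
    intro x hx
    have hx0 : ∀ j, x.val j = 0 := by
      intro j
      have := Finset.sum_eq_zero_iff_of_nonneg (fun j _ => x.2.1 j) |>.mp hx
      exact this j (Finset.mem_univ j)
    have hxv : x.val = 0 := funext hx0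
    have := hL x x x (by rw [hxv]; simp)
    have hz : (L x).val = 0 := left_eq_add.mp this
    rw [hz]
    simp [hx0]
  | succ n ih =>
    intro x hx
    -- find j with x.val j ≥ 1
    have hex : ∃ j, 1 ≤ x.val j := by
      by_contra h
      push_neg at h
      have : ∀ j, x.val j = 0 := fun j => le_antisymm (by linarith [h j]) (x.2.1 j)
      simp [this] at hx
      omega
    obtain ⟨j0, hj0⟩ := hex
    set e := euBasis u hu j0 with he
    -- y = x - e_{j0}
    have hy0 : 0 ≤ x.val - e.val := by
      intro i
      simp only [euBasis, he, Pi.sub_apply, Pi.zero_apply, sub_nonneg]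
      split
      · next h => rw [h]; exact hj0
      · exact le_trans (x.2.1 i) le_rfl
    have hyu : x.val - e.val ≤ u := by
      intro i
      have h1 : (0:ℤ) ≤ e.val i := e.2.1 i
      have := x.2.2 i
      simp only [Pi.sub_apply]
      linarith
    set y : Eu u := ⟨x.val - e.val, hy0, hyu⟩ with hyd
    have hsum : e.val + y.val = x.val := by simp [hyd]
    have hys : (∑ j, y.val j) = n := by
      have : (∑ j, y.val j) = (∑ j, x.val j) - (∑ j, e.val j) := by
        simp [hyd, Finset.sum_sub_distrib]
      have he1 : (∑ j, e.val j) = 1 := by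
        simp [he, euBasis]
      rw [this, hx, he1]
      push_cast
      ring
    have hLx := hL e y x hsum
    rw [hLx, ih y hys]
    have hxj : ∀ j, x.val j = y.val j + e.val j := by
      intro j; simp [hyd]
    calc (L e).val + ∑ j, y.val j • (L (euBasis u hu j)).val
        = ∑ j, (y.val j + e.val j) • (L (euBasis u hu j)).val := by
          rw [Finset.sum_congr rfl (fun j _ => add_smul (y.val j) (e.val j) ((L (euBasis u hu j)).val))]
          rw [Finset.sum_add_distrib]
          have : ∑ j, e.val j • (L (euBasis u hu j)).val = (L e).val := by
            rw [Finset.sum_eq_single j0]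
            · simp [he, euBasis]
            · intro b _ hb
              have : e.val b = 0 := by simp [he, euBasis, hb]
              simp [this]
            · intro h; exact absurd (Finset.mem_univ j0) h
          rw [this]; abel
      _ = ∑ j, x.val j • (L (euBasis u hu j)).val := by
          exact Finset.sum_congr rfl (fun j _ => by rw [hxj j])

/-- a binary operation on `E_u` satisfies (S1) and (S2) iff it is given
rowwise by `u`-subunital nonnegative integer matrices `M_a` with `M_u = I`. -/
theorem S1S2_iff_matrix_family {r : ℕ} (u : Fin r → ℤ) (hu : ∀ i, 1 ≤ u i)
    (t : Eu u) (ht : t.val = u) (op : Eu u → Eu u → Eu u) :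
    (EuS1 u op ∧ ∀ x : Eu u, op t x = x) ↔
      ∃ M : Eu u → Matrix (Fin r) (Fin r) ℤ,
        (∀ a, (∀ i j, 0 ≤ M a i j) ∧ (M a).mulVec u ≤ u) ∧
        (∀ a x, (op a x).val = (M a).mulVec x.val) ∧
        M t = 1 := by
  constructor
  · rintro ⟨hS1, hS2⟩
    refine ⟨fun a => Matrix.of fun i j => (op a (euBasis u hu j)).val i, ?_, ?_, ?_⟩
    · intro a
      have hform : ∀ x : Eu u, (op a x).val =
          (Matrix.of fun i j => (op a (euBasis u hu j)).val i).mulVec x.val := by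
        intro x
        have := additive_eq_sum u u hu (op a) (hS1 a) x
        funext i
        rw [this]
        simp [Matrix.mulVec, dotProduct, Finset.sum_apply, mul_comm]
      constructor
      · intro i j
        exact (op a (euBasis u hu j)).2.1 i
      · have := hform t
        rw [ht] at this
        rw [← this]
        exact (op a t).2.2
    · intro a x
      have := additive_eq_sum u u hu (op a) (hS1 a) x
      funext i
      rw [this]
      simp [Matrix.mulVec, dotProduct, Finset.sum_apply, mul_comm]
    · ext i j
      have := hS2 (euBasis u hu j)
      simp only [Matrix.of_apply, this]
      simp [euBasis, Matrix.one_apply, eq_comm]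
  · rintro ⟨M, hM1, hM2, hMt⟩
    constructor
    · intro a x y z hxyz
      rw [hM2, hM2, hM2, ← hxyz, Matrix.mulVec_add]
    · intro x
      apply Subtype.ext
      rw [hM2, hMt, Matrix.one_mulVec]
end

section
/- Let u = (n, …, n) ∈ ℤ^r with n ≥ 1. Then every r × r nonnegative integer matrix M with Mu ≤ u has each row equal to either the zero row or a standard basis vector; equivalently, the additive self-maps of E_u ≅ C_n^r are exactly the coordinate-picker maps L(x_1,…,x_r) = (x_{φ(1)},…,x_{φ(r)}) for φ : {1,…,r} → {0,1,…,r} with x_0 := 0. In particular there are exactly (r+1)^r additive self-maps. -/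
open Finset

lemma Eu_nonneg {r : ℕ} {u : Fin r → ℤ} (x : Eu u) (j : Fin r) : (0:ℤ) ≤ x.val j := x.2.1 j

lemma Eu_le {r : ℕ} {u : Fin r → ℤ} (x : Eu u) (j : Fin r) : x.val j ≤ u j := x.2.2 j

lemma dichotomy {r : ℕ} (v : Fin r → ℤ) (hv : ∀ j, 0 ≤ v j)
    (hs : ∑ j, v j ≤ 1) :
    (∀ j, v j = 0) ∨ ∃ j0, v j0 = 1 ∧ ∀ j, j ≠ j0 → v j = 0 := by
  by_cases h : ∀ j, v j = 0
  · exact Or.inl h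
  · right
    push_neg at h
    obtain ⟨j0, hj0⟩ := h
    have h1 : 0 < v j0 := (hv j0).lt_of_ne (Ne.symm hj0)
    have hsplit : v j0 + ∑ j ∈ univ.erase j0, v j = ∑ j, v j :=
      Finset.add_sum_erase _ _ (mem_univ j0)
    have hnn : (0:ℤ) ≤ ∑ j ∈ univ.erase j0, v j :=
      Finset.sum_nonneg fun j _ => hv j
    refine ⟨j0, by omega, fun j hj => ?_⟩
    have hle : v j ≤ ∑ j ∈ univ.erase j0, v j :=
      Finset.single_le_sum (fun k _ => hv k) (Finset.mem_erase.mpr ⟨hj, mem_univ j⟩)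
    have := hv j
    omega

lemma sum_single_mul {r : ℕ} (j0 : Fin r) (c : Fin r → ℤ) :
    ∑ j, (Pi.single j0 1 : Fin r → ℤ) j * c j = c j0 := by
  rw [Finset.sum_eq_single j0]
  · simp
  · intro j _ hj
    simp [Pi.single_apply, hj.symm]
  · simp

lemma sum_single {r : ℕ} (j0 : Fin r) :
    ∑ j, (Pi.single j0 1 : Fin r → ℤ) j = 1 := by
  have := sum_single_mul j0 (fun _ => (1:ℤ))
  simpa using this

lemma L_decomp {r n : ℕ} (hn : 1 ≤ n)
    (L : Eu (fun _ : Fin r => (n:ℤ)) → Eu (fun _ : Fin r => (n:ℤ)))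
    (hL : AdditiveMap _ _ L)
    (e : Fin r → Eu (fun _ : Fin r => (n:ℤ)))
    (he : ∀ j, (e j).val = Pi.single j 1) :
    ∀ x i, (L x).val i = ∑ j, x.val j * (L (e j)).val i := by
  suffices h : ∀ k : ℕ, ∀ x : Eu (fun _ : Fin r => (n:ℤ)),
      (∑ j, x.val j) = (k : ℤ) → ∀ i, (L x).val i = ∑ j, x.val j * (L (e j)).val i by
    intro x i
    have hnn : (0:ℤ) ≤ ∑ j, x.val j := Finset.sum_nonneg fun j _ => Eu_nonneg x j
    exact h (∑ j, x.val j).toNat x (by omega) i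
  intro k
  induction k with
  | zero =>
    intro x hx i
    have hz : ∀ j, x.val j = 0 := by
      intro j
      have hall := (Finset.sum_eq_zero_iff_of_nonneg (fun j _ => Eu_nonneg x j)).mp
        (by exact_mod_cast hx)
      exact hall j (mem_univ j)
    have hxval : x.val + x.val = x.val := by
      funext j; simp [hz]
    have h2 := hL x x x hxval
    have hL0 : ∀ i, (L x).val i = 0 := by
      intro i
      have := congrFun h2 i
      simp only [Pi.add_apply] at this
      omega
    rw [hL0 i]
    simp [hz]
  | succ k ih =>
    intro x hx i
    have hex : ∃ j0, 1 ≤ x.val j0 := by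
      by_contra hc
      push_neg at hc
      have hz : ∀ j, x.val j = 0 := fun j => by have := Eu_nonneg x j; have := hc j; omega
      rw [Finset.sum_eq_zero (fun j _ => hz j)] at hx
      omega
    obtain ⟨j0, hj0⟩ := hex
    have hmem : 0 ≤ x.val - (Pi.single j0 1 : Fin r → ℤ) ∧
        x.val - (Pi.single j0 1 : Fin r → ℤ) ≤ (fun _ : Fin r => (n:ℤ)) := by
      constructor
      · intro j
        show (0:ℤ) ≤ x.val j - (Pi.single j0 1 : Fin r → ℤ) j
        rw [Pi.single_apply]
        have := Eu_nonneg x j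
        split_ifs with hj
        · subst hj; omega
        · omega
      · intro j
        show x.val j - (Pi.single j0 1 : Fin r → ℤ) j ≤ (n:ℤ)
        rw [Pi.single_apply]
        have := Eu_le x j
        split_ifs <;> omega
    set x' : Eu (fun _ : Fin r => (n:ℤ)) := ⟨x.val - Pi.single j0 1, hmem⟩ with hx'
    have hadd : x'.val + (e j0).val = x.val := by
      rw [he]; funext j; simp [hx']
    have hstep := hL x' (e j0) x hadd
    have hsum' : (∑ j, x'.val j) = (k : ℤ) := by
      have heq : ∑ j, x'.val j = (∑ j, x.val j) - ∑ j, (Pi.single j0 1 : Fin r → ℤ) j := by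
        simp [hx', Finset.sum_sub_distrib]
      rw [heq, sum_single, hx]
      push_cast
      ring
    have hih := ih x' hsum' i
    have hxj : ∀ j, x.val j = x'.val j + (Pi.single j0 1 : Fin r → ℤ) j := by
      intro j; simp [hx']
    calc (L x).val i = (L x').val i + (L (e j0)).val i := by rw [hstep]; simp
    _ = (∑ j, x'.val j * (L (e j)).val i) + ∑ j, (Pi.single j0 1 : Fin r → ℤ) j * (L (e j)).val i := by
        rw [hih, sum_single_mul j0 (fun j => (L (e j)).val i)]
    _ = ∑ j, x.val j * (L (e j)).val i := by
        rw [← Finset.sum_add_distrib]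
        refine Finset.sum_congr rfl fun j _ => ?_
        rw [hxj j]; ring


/-- for homogeneous `u = (n, …, n)`, every `u`-subunital nonnegative
integer matrix has each row zero or a standard basis vector; equivalently the additive
self-maps of `E_u ≅ C_n^r` are exactly the coordinate-picker maps, and there are
exactly `(r+1)^r` of them. -/
theorem homogeneous_coordinate_pickers (r n : ℕ) (hn : 1 ≤ n)
    (u : Fin r → ℤ) (hu : u = fun _ => (n : ℤ)) :
    (∀ M : Matrix (Fin r) (Fin r) ℤ, (∀ i j, 0 ≤ M i j) → M.mulVec u ≤ u →
      ∀ i : Fin r, (M i = 0) ∨ ∃ j : Fin r, M i = Pi.single j 1) ∧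
    (∀ L : Eu u → Eu u, AdditiveMap u u L ↔
      ∃ φ : Fin r → Option (Fin r),
        ∀ (x : Eu u) (i : Fin r), (L x).val i = (φ i).elim 0 (fun j => x.val j)) ∧
    Nat.card {L : Eu u → Eu u // AdditiveMap u u L} = (r + 1) ^ r := by
  subst hu
  have hnpos : (0:ℤ) < (n:ℤ) := by exact_mod_cast hn
  -- the unit vectors
  have hemem : ∀ j : Fin r, 0 ≤ (Pi.single j 1 : Fin r → ℤ) ∧
      (Pi.single j 1 : Fin r → ℤ) ≤ (fun _ : Fin r => (n:ℤ)) := by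
    intro j
    constructor
    · intro i
      show (0:ℤ) ≤ (Pi.single j 1 : Fin r → ℤ) i
      rw [Pi.single_apply]; split_ifs <;> omega
    · intro i
      show (Pi.single j 1 : Fin r → ℤ) i ≤ (n:ℤ)
      rw [Pi.single_apply]; split_ifs <;> omega
  set e : Fin r → Eu (fun _ : Fin r => (n:ℤ)) :=
    fun j => ⟨Pi.single j 1, hemem j⟩ with he_def
  have he : ∀ j, (e j).val = Pi.single j 1 := fun j => rfl
  -- Part 1
  have part1 : ∀ M : Matrix (Fin r) (Fin r) ℤ, (∀ i j, 0 ≤ M i j) →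
      M.mulVec (fun _ => (n:ℤ)) ≤ (fun _ => (n:ℤ)) →
      ∀ i : Fin r, (M i = 0) ∨ ∃ j : Fin r, M i = Pi.single j 1 := by
    intro M hM hMu i
    have hrow : (∑ j, M i j) ≤ 1 := by
      have h1 : M.mulVec (fun _ => (n:ℤ)) i ≤ (n:ℤ) := hMu i
      have h2 : M.mulVec (fun _ => (n:ℤ)) i = (∑ j, M i j) * (n:ℤ) := by
        simp [Matrix.mulVec, dotProduct, Finset.sum_mul]
      rw [h2] at h1
      nlinarith [hnpos]
    rcases dichotomy (M i) (hM i) hrow with h | ⟨j0, hj0, hz⟩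
    · left; funext j; exact h j
    · right; exact ⟨j0, funext fun j => by
        rw [Pi.single_apply]
        split_ifs with hj
        · subst hj; exact hj0
        · exact hz j hj⟩
  -- Part 2
  have part2 : ∀ L : Eu (fun _ : Fin r => (n:ℤ)) → Eu (fun _ : Fin r => (n:ℤ)),
      AdditiveMap _ _ L ↔
      ∃ φ : Fin r → Option (Fin r),
        ∀ (x : Eu (fun _ : Fin r => (n:ℤ))) (i : Fin r),
          (L x).val i = (φ i).elim 0 (fun j => x.val j) := by
    intro L
    constructor
    · intro hL
      have hdec := L_decomp hn L hL e he
      set v : Fin r → Fin r → ℤ := fun j => (L (e j)).val with hv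
      have htopmem : 0 ≤ (fun _ : Fin r => (n:ℤ)) ∧
          (fun _ : Fin r => (n:ℤ)) ≤ (fun _ : Fin r => (n:ℤ)) := by
        constructor
        · intro i; show (0:ℤ) ≤ (n:ℤ); omega
        · intro i; exact le_refl _
      set top : Eu (fun _ : Fin r => (n:ℤ)) := ⟨fun _ => (n:ℤ), htopmem⟩ with htop
      have hsum : ∀ i, ∑ j, v j i ≤ 1 := by
        intro i
        have h1 := hdec top i
        have h2 : (L top).val i ≤ (n:ℤ) := Eu_le _ i
        have h3 : ∑ j, top.val j * v j i = (n:ℤ) * ∑ j, v j i := by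
          rw [Finset.mul_sum]
        rw [h1] at h2
        rw [h3] at h2
        nlinarith [hnpos]
      have hd : ∀ i, (∀ j, v j i = 0) ∨ ∃ j0, v j0 i = 1 ∧ ∀ j, j ≠ j0 → v j i = 0 :=
        fun i => dichotomy (fun j => v j i) (fun j => Eu_nonneg (L (e j)) i) (hsum i)
      classical
      refine ⟨fun i => if h : ∃ j0, v j0 i = 1 ∧ ∀ j, j ≠ j0 → v j i = 0
        then some h.choose else none, ?_⟩
      intro x i
      rw [hdec x i]
      show ∑ j, x.val j * v j i =
        (if h : ∃ j0, v j0 i = 1 ∧ ∀ j, j ≠ j0 → v j i = 0 then some h.choose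
          else none).elim 0 fun j => x.val j
      by_cases h : ∃ j0, v j0 i = 1 ∧ ∀ j, j ≠ j0 → v j i = 0
      · rw [dif_pos h]
        obtain ⟨h1, h2⟩ := h.choose_spec
        show ∑ j, x.val j * v j i = x.val h.choose
        rw [Finset.sum_eq_single h.choose]
        · rw [h1, mul_one]
        · intro j _ hj; rw [h2 j hj, mul_zero]
        · simp
      · rw [dif_neg h]
        have hall : ∀ j, v j i = 0 := (hd i).resolve_right h
        show ∑ j, x.val j * v j i = 0
        exact Finset.sum_eq_zero fun j _ => by rw [hall j, mul_zero]
    · rintro ⟨φ, hφ⟩ x y z hxyz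
      funext i
      rw [Pi.add_apply, hφ z i, hφ x i, hφ y i]
      cases hc : φ i with
      | none => simp
      | some j =>
        have := congrFun hxyz j
        simp only [Pi.add_apply] at this
        simp [← this]
  -- Part 3
  have pickmem : ∀ (φ : Fin r → Option (Fin r)) (x : Eu (fun _ : Fin r => (n:ℤ))),
      0 ≤ (fun i => (φ i).elim 0 (fun j => x.val j)) ∧
      (fun i => (φ i).elim 0 (fun j => x.val j)) ≤ (fun _ : Fin r => (n:ℤ)) := by
    intro φ x
    constructor
    · intro i
      show (0:ℤ) ≤ (φ i).elim 0 (fun j => x.val j)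
      cases φ i with
      | none => simp
      | some j => simpa using Eu_nonneg x j
    · intro i
      show (φ i).elim 0 (fun j => x.val j) ≤ (n:ℤ)
      cases φ i with
      | none => simp
      | some j => simpa using Eu_le x j
  set F : (Fin r → Option (Fin r)) → {L : Eu (fun _ : Fin r => (n:ℤ)) → Eu (fun _ : Fin r => (n:ℤ)) // AdditiveMap _ _ L} :=
    fun φ => ⟨fun x => ⟨fun i => (φ i).elim 0 (fun j => x.val j), pickmem φ x⟩,
      (part2 _).mpr ⟨φ, fun x i => rfl⟩⟩ with hF_def
  have hinj : Function.Injective F := by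
    intro φ1 φ2 hF
    have happ : ∀ (x : Eu (fun _ : Fin r => (n:ℤ))) (i : Fin r),
        (φ1 i).elim 0 (fun j => x.val j) = (φ2 i).elim 0 (fun j => x.val j) := by
      intro x i
      have h1 := congrArg Subtype.val hF
      have h2 := congrFun h1 x
      have h3 := congrArg Subtype.val h2
      exact congrFun h3 i
    funext i
    cases hc1 : φ1 i with
    | none =>
      cases hc2 : φ2 i with
      | none => rfl
      | some j =>
        have := happ (e j) i
        rw [hc1, hc2] at this
        simp [he, Pi.single_apply] at this
    | some j =>
      cases hc2 : φ2 i with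
      | none =>
        have := happ (e j) i
        rw [hc1, hc2] at this
        simp [he, Pi.single_apply] at this
      | some j' =>
        have := happ (e j) i
        rw [hc1, hc2] at this
        simp only [Option.elim, he, Pi.single_apply] at this
        by_cases hjj : j' = j
        · rw [hjj]
        · simp [hjj] at this
  have hsurj : Function.Surjective F := by
    rintro ⟨L, hL⟩
    obtain ⟨φ, hφ⟩ := (part2 L).mp hL
    exact ⟨φ, Subtype.ext (funext fun x => Subtype.ext (funext fun i => (hφ x i).symm))⟩
  refine ⟨part1, part2, ?_⟩
  rw [← Nat.card_eq_of_bijective F ⟨hinj, hsurj⟩]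
  simp [Nat.card_eq_fintype_card]
end

section
/- On the four-element Boolean effect algebra B_2 = {0, p, q, 1} with p ⊕ q = 1, there are exactly 34 binary operations satisfying axioms (S1), (S2), and (S3). -/
abbrev V := Bool × Bool

abbrev E2 := Eu (fun _ : Fin 2 => (1 : ℤ))

def dec2 (b : V) : E2 :=
  ⟨fun i => if i = 0 then (if b.1 then 1 else 0) else (if b.2 then 1 else 0), by
    constructor <;> intro i <;> fin_cases i <;> dsimp <;> split <;> simp⟩

def enc2 (x : E2) : V := (decide (x.val 0 = 1), decide (x.val 1 = 1))

lemma mem01 (x : E2) (i : Fin 2) : x.val i = 0 ∨ x.val i = 1 := by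
  have h1 := x.2.1 i
  have h2 := x.2.2 i
  simp only [Pi.zero_apply] at h1
  dsimp at h2
  omega

lemma dec2_enc2 (x : E2) : dec2 (enc2 x) = x := by
  apply Subtype.ext
  funext i
  fin_cases i <;> rcases mem01 x 0 with h0 | h0 <;> rcases mem01 x 1 with h1 | h1 <;>
    simp [dec2, enc2, h0, h1]

lemma enc2_dec2 (b : V) : enc2 (dec2 b) = b := by
  obtain ⟨b1, b2⟩ := b
  cases b1 <;> cases b2 <;> simp [dec2, enc2] <;> rfl

def pE : E2 := dec2 (true, false)
def qE : E2 := dec2 (false, true)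
def oneE : E2 := dec2 (true, true)
def zeroE : E2 := dec2 (false, false)

def opV (f : V → V × V) (a x : V) : V :=
  ((x.1 && (f a).1.1 || x.2 && (f a).2.1), (x.1 && (f a).1.2 || x.2 && (f a).2.2))

def condV (f : V → V × V) : Prop :=
  (∀ a : V, ¬((f a).1.1 ∧ (f a).2.1) ∧ ¬((f a).1.2 ∧ (f a).2.2)) ∧
  f (true, true) = ((true, false), (false, true)) ∧
  (∀ a b : V, opV f a b = (false, false) → opV f b a = (false, false))

abbrev Rows := (V × V) × (V × V) × (V × V)

def fRow (R : Rows) : V → V × V := fun a =>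
  match a with
  | (false, false) => R.1
  | (true, false) => R.2.1
  | (false, true) => R.2.2
  | (true, true) => ((true, false), (false, true))

instance (f : V → V × V) : Decidable (condV f) := by unfold condV; infer_instance

set_option maxRecDepth 100000 in
set_option maxHeartbeats 8000000 in
theorem cardR : Fintype.card {R : Rows // condV (fRow R)} = 34 := by decide

-- ops satisfying S1 vanish at zero
lemma op_zero (op : E2 → E2 → E2) (h1 : EuS1 (fun _ : Fin 2 => 1) op) (a : E2) :
    (op a zeroE).val = 0 := by
  have h := h1 a zeroE zeroE zeroE (by
    apply funext; intro i; fin_cases i <;> simp [zeroE, dec2])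
  funext i
  have := congrFun h i
  simp only [Pi.add_apply] at this
  simp only [Pi.zero_apply]
  omega

lemma op_one (op : E2 → E2 → E2) (h1 : EuS1 (fun _ : Fin 2 => 1) op) (a : E2) :
    (op a oneE).val = (op a pE).val + (op a qE).val := by
  exact h1 a pE qE oneE (by
    apply funext; intro i; fin_cases i <;> simp [pE, qE, oneE, dec2])

lemma x_cases (x : E2) : x = zeroE ∨ x = pE ∨ x = qE ∨ x = oneE := by
  rcases mem01 x 0 with h0 | h0 <;> rcases mem01 x 1 with h1 | h1
  · left; apply Subtype.ext; funext i; fin_cases i <;> simp [zeroE, dec2, h0, h1]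
  · right; right; left; apply Subtype.ext; funext i; fin_cases i <;> simp [qE, dec2, h0, h1]
  · right; left; apply Subtype.ext; funext i; fin_cases i <;> simp [pE, dec2, h0, h1]
  · right; right; right; apply Subtype.ext; funext i; fin_cases i <;> simp [oneE, dec2, h0, h1]

-- the row function of an op
def rowF (op : E2 → E2 → E2) : V → V × V :=
  fun A => (enc2 (op (dec2 A) pE), enc2 (op (dec2 A) qE))

-- orthogonality of rows
lemma row_orth (op : E2 → E2 → E2) (h1 : EuS1 (fun _ : Fin 2 => 1) op) (a : E2)
    (i : Fin 2) : (op a pE).val i + (op a qE).val i ≤ 1 := by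
  have h := op_one op h1 a
  have hb := (op a oneE).2.2 i
  have := congrFun h i
  simp only [Pi.add_apply] at this
  dsimp at hb
  omega

-- reconstruction: an S1 op is determined by its row values
lemma recon (op : E2 → E2 → E2) (h1 : EuS1 (fun _ : Fin 2 => 1) op) (a x : E2) :
    op a x = dec2 (opV (rowF op) (enc2 a) (enc2 x)) := by
  have ha : dec2 (enc2 a) = a := dec2_enc2 a
  rcases x_cases x with hx | hx | hx | hx <;> subst hx
  · rw [show enc2 zeroE = (false, false) from enc2_dec2 _]
    apply Subtype.ext
    rw [show opV (rowF op) (enc2 a) (false, false) = (false, false) by simp [opV]]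
    rw [op_zero op h1 a]
    funext i; fin_cases i <;> simp [dec2]
  · rw [show enc2 pE = (true, false) from enc2_dec2 _]
    rw [show opV (rowF op) (enc2 a) (true, false) = (rowF op (enc2 a)).1 by simp [opV]]
    rw [show (rowF op (enc2 a)).1 = enc2 (op a pE) by simp [rowF, ha]]
    rw [dec2_enc2]
  · rw [show enc2 qE = (false, true) from enc2_dec2 _]
    rw [show opV (rowF op) (enc2 a) (false, true) = (rowF op (enc2 a)).2 by simp [opV]]
    rw [show (rowF op (enc2 a)).2 = enc2 (op a qE) by simp [rowF, ha]]
    rw [dec2_enc2]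
  · rw [show enc2 oneE = (true, true) from enc2_dec2 _]
    apply Subtype.ext
    have h := op_one op h1 a
    funext i
    have hone := congrFun h i
    simp only [Pi.add_apply] at hone
    have ho := row_orth op h1 a i
    rcases mem01 (op a pE) i with hp | hp <;> rcases mem01 (op a qE) i with hq | hq <;>
      fin_cases i <;>
      simp_all [dec2, opV, rowF, enc2] <;> omega

lemma dec2_val_zero (v : V) : (dec2 v).val = 0 ↔ v = (false, false) := by
  constructor
  · intro h
    have h0 := congrFun h 0
    have h1 := congrFun h 1
    clear h
    obtain ⟨a, b⟩ := v
    cases a <;> cases b <;> simp_all [dec2]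
  · rintro rfl
    funext i; fin_cases i <;> simp [dec2]

lemma row_orth' (op : E2 → E2 → E2) (h1 : EuS1 (fun _ : Fin 2 => 1) op) (A : V) :
    ¬((rowF op A).1.1 ∧ (rowF op A).2.1) ∧ ¬((rowF op A).1.2 ∧ (rowF op A).2.2) := by
  constructor
  · have := row_orth op h1 (dec2 A) 0
    simp only [rowF, enc2]
    rintro ⟨hp, hq⟩
    simp only [decide_eq_true_eq] at hp hq
    omega
  · have := row_orth op h1 (dec2 A) 1
    simp only [rowF, enc2]
    rintro ⟨hp, hq⟩
    simp only [decide_eq_true_eq] at hp hq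
    omega

lemma condV_rowF (op : E2 → E2 → E2) (h1 : EuS1 (fun _ : Fin 2 => 1) op)
    (h2 : ∀ x, op oneE x = x) (h3 : EuS3 (fun _ : Fin 2 => 1) op) :
    condV (rowF op) := by
  refine ⟨row_orth' op h1, ?_, ?_⟩
  · show (enc2 (op (dec2 (true, true)) pE), enc2 (op (dec2 (true, true)) qE)) = _
    rw [show dec2 (true, true) = oneE from rfl, h2, h2,
      show enc2 pE = (true, false) from enc2_dec2 _,
      show enc2 qE = (false, true) from enc2_dec2 _]
  · intro A B hAB
    have key : ∀ X Y : V, (op (dec2 X) (dec2 Y)).val = 0 ↔ opV (rowF op) X Y = (false, false) := by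
      intro X Y
      rw [recon op h1 (dec2 X) (dec2 Y), enc2_dec2, enc2_dec2, dec2_val_zero]
    rw [← key] at hAB ⊢
    exact h3 _ _ hAB

def opOf (f : V → V × V) : E2 → E2 → E2 :=
  fun a x => dec2 (opV f (enc2 a) (enc2 x))

lemma boolAdd (r1 r2 x1 x2 y1 y2 : Bool) (hr : ¬(r1 = true ∧ r2 = true))
    (hx : ¬(x1 = true ∧ y1 = true)) (hy : ¬(x2 = true ∧ y2 = true)) :
    (if ((x1 || y1) && r1 || (x2 || y2) && r2 : Bool) = true then (1 : ℤ) else 0) =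
      (if (x1 && r1 || x2 && r2 : Bool) = true then 1 else 0) +
        (if (y1 && r1 || y2 && r2 : Bool) = true then 1 else 0) := by
  cases r1 <;> cases r2 <;> cases x1 <;> cases x2 <;> cases y1 <;> cases y2 <;> simp_all

lemma enc_coord (xv yv zv : ℤ) (hx : xv = 0 ∨ xv = 1) (hy : yv = 0 ∨ yv = 1)
    (hz : zv = 0 ∨ zv = 1) (h : xv + yv = zv) :
    decide (zv = 1) = (decide (xv = 1) || decide (yv = 1)) ∧
      ¬(decide (xv = 1) = true ∧ decide (yv = 1) = true) := by
  rcases hx with rfl | rfl <;> rcases hy with rfl | rfl <;> simp_all <;> omega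

lemma opOf_S1 (f : V → V × V) (hf : condV f) : EuS1 (fun _ : Fin 2 => 1) (opOf f) := by
  intro a x y z hxyz
  have h0 := congrFun hxyz 0
  have h1 := congrFun hxyz 1
  simp only [Pi.add_apply] at h0 h1
  obtain ⟨e0, d0⟩ := enc_coord _ _ _ (mem01 x 0) (mem01 y 0) (mem01 z 0) h0
  obtain ⟨e1, d1⟩ := enc_coord _ _ _ (mem01 x 1) (mem01 y 1) (mem01 z 1) h1
  have hez : enc2 z = ((enc2 x).1 || (enc2 y).1, (enc2 x).2 || (enc2 y).2) := by
    simp only [enc2]; rw [e0, e1]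
  show (dec2 (opV f (enc2 a) (enc2 z))).val =
    (dec2 (opV f (enc2 a) (enc2 x))).val + (dec2 (opV f (enc2 a) (enc2 y))).val
  funext i
  have horth := hf.1 (enc2 a)
  fin_cases i
  · simp only [Pi.add_apply, dec2, opV, hez, if_pos rfl]
    exact boolAdd _ _ _ _ _ _ horth.1 d0 d1
  · simp only [Pi.add_apply, dec2, opV, hez, if_neg (show ¬(1 : Fin 2) = 0 by decide)]
    exact boolAdd _ _ _ _ _ _ horth.2 d0 d1

lemma opOf_S2 (f : V → V × V) (hf : condV f) (x : E2) : opOf f oneE x = x := by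
  show dec2 (opV f (enc2 oneE) (enc2 x)) = x
  rw [show enc2 oneE = (true, true) from enc2_dec2 _]
  have : opV f (true, true) (enc2 x) = enc2 x := by
    simp [opV, hf.2.1]
  rw [this, dec2_enc2]

lemma opOf_S3 (f : V → V × V) (hf : condV f) : EuS3 (fun _ : Fin 2 => 1) (opOf f) := by
  intro a b hab
  rw [show opOf f a b = dec2 (opV f (enc2 a) (enc2 b)) from rfl, dec2_val_zero] at hab
  rw [show opOf f b a = dec2 (opV f (enc2 b) (enc2 a)) from rfl, dec2_val_zero]
  exact hf.2.2 _ _ hab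

lemma fRow_eq (f : V → V × V) (hf : condV f) :
    fRow (f (false, false), f (true, false), f (false, true)) = f := by
  funext A
  obtain ⟨a, b⟩ := A
  cases a <;> cases b <;> simp [fRow, hf.2.1]

/-- on `B₂ = E_{(1,1)}` there are exactly 34 binary operations
satisfying (S1), (S2) and (S3). -/
theorem B2_S1S3_count
    (t : Eu (fun _ : Fin 2 => (1 : ℤ))) (ht : t.val = fun _ => (1 : ℤ)) :
    Nat.card {op : Eu (fun _ : Fin 2 => (1 : ℤ)) → Eu (fun _ : Fin 2 => (1 : ℤ)) →
        Eu (fun _ : Fin 2 => (1 : ℤ)) //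
      EuS1 (fun _ : Fin 2 => (1 : ℤ)) op ∧ (∀ x, op t x = x) ∧
        EuS3 (fun _ : Fin 2 => (1 : ℤ)) op} = 34 := by
  have htone : t = oneE := by
    apply Subtype.ext
    rw [ht]; funext i; fin_cases i <;> simp [oneE, dec2]
  subst htone
  have e1 : {op : E2 → E2 → E2 //
      EuS1 (fun _ : Fin 2 => (1 : ℤ)) op ∧ (∀ x, op oneE x = x) ∧
        EuS3 (fun _ : Fin 2 => (1 : ℤ)) op} ≃ {f : V → V × V // condV f} :=
    { toFun := fun op => ⟨rowF op.1, condV_rowF op.1 op.2.1 op.2.2.1 op.2.2.2⟩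
      invFun := fun f => ⟨opOf f.1, opOf_S1 f.1 f.2, opOf_S2 f.1 f.2, opOf_S3 f.1 f.2⟩
      left_inv := fun op => Subtype.ext (by
        funext a x
        exact (recon op.1 op.2.1 a x).symm)
      right_inv := fun f => Subtype.ext (by
        funext A
        show (enc2 (dec2 (opV f.1 (enc2 (dec2 A)) (enc2 pE))),
              enc2 (dec2 (opV f.1 (enc2 (dec2 A)) (enc2 qE)))) = f.1 A
        rw [enc2_dec2 A, show enc2 pE = (true, false) from enc2_dec2 _,
          show enc2 qE = (false, true) from enc2_dec2 _, enc2_dec2, enc2_dec2]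
        simp [opV]) }
  have e2 : {f : V → V × V // condV f} ≃ {R : Rows // condV (fRow R)} :=
    { toFun := fun f => ⟨(f.1 (false, false), f.1 (true, false), f.1 (false, true)), by
        rw [fRow_eq f.1 f.2]; exact f.2⟩
      invFun := fun R => ⟨fRow R.1, R.2⟩
      left_inv := fun f => Subtype.ext (fRow_eq f.1 f.2)
      right_inv := fun R => Subtype.ext rfl }
  rw [Nat.card_congr (e1.trans e2), Nat.card_eq_fintype_card, cardR]
end

section
/- Let n ≥ 1. There is exactly one binary operation ∘ on the finite chain C_n = {0,…,n} satisfying (S1), (S2), and (S3), namely σ_n(a, b) = 0 if a = 0 and σ_n(a, b) = b if a ≠ 0. -/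
/-- The finite chain effect algebra `C_n = {0, 1, …, n}` with `i ⊕ j = i + j`
when `i + j ≤ n`. -/
def Chain (n : ℕ) : Type := {k : ℕ // k ≤ n}

/-- A self-map of `C_n` is additive if `L (i + j) = L i + L j` whenever `i + j ≤ n`. -/
def ChainAdditive {n : ℕ} (L : Chain n → Chain n) : Prop :=
  ∀ i j k : Chain n, i.val + j.val = k.val → (L k).val = (L i).val + (L j).val

/-- the top element `n` of `C_n`. -/
def ChainTop (n : ℕ) : Chain n := ⟨n, le_refl n⟩

/-- (S1) on `C_n`: every left translation is additive. -/
def ChainS1 {n : ℕ} (op : Chain n → Chain n → Chain n) : Prop :=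
  ∀ a : Chain n, ChainAdditive (op a)

/-- (S2) on `C_n`: `n ∘ b = b`. -/
def ChainS2 {n : ℕ} (op : Chain n → Chain n → Chain n) : Prop :=
  ∀ b : Chain n, op (ChainTop n) b = b

/-- (S3) on `C_n`: `a ∘ b = 0` implies `b ∘ a = 0`. -/
def ChainS3 {n : ℕ} (op : Chain n → Chain n → Chain n) : Prop :=
  ∀ a b : Chain n, (op a b).val = 0 → (op b a).val = 0

/-- The operation `σ_n` of the paper. -/
def chainSigma (n : ℕ) (a b : Chain n) : Chain n :=
  if a.val = 0 then ⟨0, Nat.zero_le n⟩ else b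

section

variable {n : ℕ} {a : Chain n}

theorem chainSigma_of_val_eq_zero (ha : a.val = 0) (b : Chain n) :
    chainSigma n a b = ⟨0, Nat.zero_le n⟩ :=
  if_pos ha

theorem chainSigma_of_val_ne_zero (ha : a.val ≠ 0) (b : Chain n) : chainSigma n a b = b :=
  if_neg ha

end

namespace ChainAdditive

variable {n : ℕ} {L : Chain n → Chain n}

theorem val_apply_zero (hL : ChainAdditive L) : (L ⟨0, Nat.zero_le n⟩).val = 0 := by
  have := hL ⟨0, Nat.zero_le n⟩ ⟨0, Nat.zero_le n⟩ ⟨0, Nat.zero_le n⟩ rfl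
  omega

theorem val_apply_eq_mul (hL : ChainAdditive L) (hn : 1 ≤ n) (k : Chain n) :
    (L k).val = k.val * (L ⟨1, hn⟩).val := by
  obtain ⟨m, hm⟩ := k
  induction m with
  | zero => simpa using hL.val_apply_zero
  | succ m ih =>
    rw [hL ⟨m, by omega⟩ ⟨1, hn⟩ ⟨m + 1, hm⟩ rfl, ih (by omega)]
    ring

/-- An additive self-map of `C_n` is determined by `c = L 1` via `L k = k c`, and `L n = n c ≤ n`
forces `c ≤ 1`. -/
theorem eq_zero_or_eq_id (hL : ChainAdditive L) (hn : 1 ≤ n) :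
    (∀ b, (L b).val = 0) ∨ ∀ b, L b = b := by
  have hc : (L ⟨1, hn⟩).val ≤ 1 := by
    have h := hL.val_apply_eq_mul hn (ChainTop n)
    have htop := (L (ChainTop n)).2
    change (L (ChainTop n)).val = n * _ at h
    nlinarith
  rcases Nat.le_one_iff_eq_zero_or_eq_one.mp hc with h0 | h1
  · exact Or.inl fun b => by rw [hL.val_apply_eq_mul hn, h0, mul_zero]
  · exact Or.inr fun b => Subtype.ext (by rw [hL.val_apply_eq_mul hn, h1, mul_one])

end ChainAdditive

section

variable {n : ℕ}

theorem chainS1_chainSigma : ChainS1 (chainSigma n) := by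
  intro a i j k hij
  by_cases ha : a.val = 0 <;> simp [chainSigma, ha, hij]

theorem chainS2_chainSigma : ChainS2 (chainSigma n) := by
  intro b
  by_cases hn : n = 0
  · rw [chainSigma_of_val_eq_zero hn]
    exact Subtype.ext (Nat.le_zero.mp (hn ▸ b.2)).symm
  · exact chainSigma_of_val_ne_zero hn b

theorem chainS3_chainSigma : ChainS3 (chainSigma n) := by
  intro a b hab
  by_cases ha : a.val = 0 <;> by_cases hb : b.val = 0 <;> simp_all [chainSigma]

theorem eq_chainSigma_of_chainS1_of_chainS2_of_chainS3 {op : Chain n → Chain n → Chain n}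
    (hS1 : ChainS1 op) (hS2 : ChainS2 op) (hS3 : ChainS3 op) (a b : Chain n) :
    op a b = chainSigma n a b := by
  by_cases ha : a.val = 0
  · have ha' : a = ⟨0, Nat.zero_le n⟩ := Subtype.ext ha
    rw [chainSigma_of_val_eq_zero ha]
    exact Subtype.ext (hS3 b a (ha' ▸ (hS1 b).val_apply_zero))
  · rw [chainSigma_of_val_ne_zero ha]
    rcases (hS1 a).eq_zero_or_eq_id (by have := a.2; omega) with h0 | hid
    · -- `a ∘ n = 0` would give `a = n ∘ a = 0` by (S3) and (S2).
      have h := hS3 a (ChainTop n) (h0 (ChainTop n))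
      exact absurd (hS2 a ▸ h) ha
    · exact hid b

end

theorem chain_S1S3_unique_general (n : ℕ) :
    ∀ op : Chain n → Chain n → Chain n,
      (ChainS1 op ∧ ChainS2 op ∧ ChainS3 op) ↔
        (∀ a b : Chain n, op a b = if a.val = 0 then ⟨0, Nat.zero_le n⟩ else b) := by
  intro op
  constructor
  · rintro ⟨hS1, hS2, hS3⟩
    exact eq_chainSigma_of_chainS1_of_chainS2_of_chainS3 hS1 hS2 hS3
  · intro h
    obtain rfl : op = chainSigma n := funext₂ h
    exact ⟨chainS1_chainSigma, chainS2_chainSigma, chainS3_chainSigma⟩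

/-- for `n ≥ 1`, a binary operation on `C_n` satisfies (S1)-(S3) iff it
is the operation `σ_n (a, b) = 0` for `a = 0` and `σ_n (a, b) = b` for `a ≠ 0`; in
particular there is exactly one (S1)-(S3) operation on `C_n`. -/
theorem chain_S1S3_unique (n : ℕ) (hn : 1 ≤ n) :
    ∀ op : Chain n → Chain n → Chain n,
      (ChainS1 op ∧ ChainS2 op ∧ ChainS3 op) ↔
        (∀ a b : Chain n, op a b = if a.val = 0 then ⟨0, Nat.zero_le n⟩ else b) :=
  chain_S1S3_unique_general n
end
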